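/- arXiv:2509.01928 — 6 statements merged into one kernel-verified Lean document; each statement's English description precedes it below -/
import Mathlib

section
/- Let n ≥ 1, let J be a symmetric n×n real matrix with zero diagonal, and let α, β > 0. Suppose x* ∈ ℝⁿ is a global minimizer of the Hamiltonian H(x) = (β/4)·∑ x_i⁴ − (α/2)·∑ x_i² − (1/2) xᵀ J x, and suppose there exists λ > 0 such that |x*_i| = λ for all i (i.e., x* is a vertex of the scaled hypercube {-λ, λ}ⁿ). Then the spin vector s* = sign(x*) ∈ {-1,1}ⁿ is a global minimizer of the Ising energy E(s) = −(1/2) sᵀ J s over {-1,1}ⁿ. -/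
/-!
On the scaled hypercube `{-λ, λ}ⁿ` the quartic and quadratic terms of `H` are constant, so
`H(λ s) = n (β λ⁴ / 4 - α λ² / 2) + λ² E(s)` for every spin vector `s`. Since `x* = λ sign(x*)`,
comparing `H(x*)` with `H(λ s)` gives `λ² E(sign x*) ≤ λ² E(s)`.
-/

open Matrix

/-- The Hamiltonian `H(x) = (β/4)·∑ xᵢ⁴ − (α/2)·∑ xᵢ² − (1/2) xᵀ J x`. -/
noncomputable def hamiltonianH {n : ℕ} (J : Matrix (Fin n) (Fin n) ℝ) (α β : ℝ)
    (x : Fin n → ℝ) : ℝ :=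
  β / 4 * ∑ i, x i ^ 4 - α / 2 * ∑ i, x i ^ 2 - 1/2 * (x ⬝ᵥ (J *ᵥ x))

/-- The homogeneous Ising energy `E(s) = −(1/2) sᵀ J s`. -/
noncomputable def isingE {n : ℕ} (J : Matrix (Fin n) (Fin n) ℝ) (s : Fin n → ℝ) : ℝ :=
  -(1/2) * (s ⬝ᵥ (J *ᵥ s))

theorem Real.abs_mul_sign (r : ℝ) : |r| * Real.sign r = r := by
  rcases lt_trichotomy r 0 with h | rfl | h
  · rw [abs_of_neg h, Real.sign_of_neg h]; ring
  · simp
  · rw [abs_of_pos h, Real.sign_of_pos h, mul_one]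

section

variable {n : ℕ} (J : Matrix (Fin n) (Fin n) ℝ)

theorem isingE_smul (c : ℝ) (s : Fin n → ℝ) : isingE J (c • s) = c ^ 2 * isingE J s := by
  simp only [isingE, mulVec_smul, smul_dotProduct, dotProduct_smul, smul_eq_mul]
  ring

theorem hamiltonianH_eq_add_isingE (α β : ℝ) (x : Fin n → ℝ) :
    hamiltonianH J α β x = β / 4 * ∑ i, x i ^ 4 - α / 2 * ∑ i, x i ^ 2 + isingE J x := by
  rw [hamiltonianH, isingE]
  ring

theorem hamiltonianH_smul_spin (α β c : ℝ) {s : Fin n → ℝ}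
    (hs : ∀ i, s i = 1 ∨ s i = -1) :
    hamiltonianH J α β (c • s) = n * (β / 4 * c ^ 4 - α / 2 * c ^ 2) + c ^ 2 * isingE J s := by
  have hsq : ∀ i, s i ^ 2 = 1 := fun i => by rcases hs i with h | h <;> simp [h]
  have h4 : ∀ i, (c • s) i ^ 4 = c ^ 4 := fun i => by
    rw [Pi.smul_apply, smul_eq_mul, mul_pow, show s i ^ 4 = (s i ^ 2) ^ 2 by ring, hsq, one_pow,
      mul_one]
  have h2 : ∀ i, (c • s) i ^ 2 = c ^ 2 := fun i => by
    rw [Pi.smul_apply, smul_eq_mul, mul_pow, hsq, mul_one]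
  simp only [hamiltonianH_eq_add_isingE, isingE_smul, h4, h2, Finset.sum_const, Finset.card_univ,
    Fintype.card_fin, nsmul_eq_mul]
  ring

end

theorem stmt_8_general (n : ℕ) (J : Matrix (Fin n) (Fin n) ℝ)
    (α β : ℝ)
    (xstar : Fin n → ℝ)
    (hmin : ∀ x : Fin n → ℝ, hamiltonianH J α β xstar ≤ hamiltonianH J α β x)
    (hvert : ∃ lam : ℝ, 0 < lam ∧ ∀ i, |xstar i| = lam) :
    ∀ s : Fin n → ℝ, (∀ i, s i = 1 ∨ s i = -1) →
      isingE J (fun i => Real.sign (xstar i)) ≤ isingE J s := by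
  intro s hs
  obtain ⟨lam, hlam, habs⟩ := hvert
  have hsign : ∀ i, Real.sign (xstar i) = 1 ∨ Real.sign (xstar i) = -1 := fun i =>
    (Real.sign_apply_eq_of_ne_zero _ (abs_pos.mp (habs i ▸ hlam))).symm
  have hxstar : xstar = lam • fun i => Real.sign (xstar i) := funext fun i => by
    rw [Pi.smul_apply, smul_eq_mul, ← habs i, Real.abs_mul_sign]
  have hle := hmin (lam • s)
  rw [hxstar, hamiltonianH_smul_spin J α β lam hsign,
    hamiltonianH_smul_spin J α β lam hs] at hle
  exact le_of_mul_le_mul_left ((add_le_add_iff_left _).mp hle) (by positivity)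

theorem stmt_8 (n : ℕ) (hn : 1 ≤ n) (J : Matrix (Fin n) (Fin n) ℝ)
    (hJs : J.IsSymm) (hJd : ∀ i, J i i = 0) (α β : ℝ) (hα : 0 < α) (hβ : 0 < β)
    (xstar : Fin n → ℝ)
    (hmin : ∀ x : Fin n → ℝ, hamiltonianH J α β xstar ≤ hamiltonianH J α β x)
    (hvert : ∃ lam : ℝ, 0 < lam ∧ ∀ i, |xstar i| = lam) :
    ∀ s : Fin n → ℝ, (∀ i, s i = 1 ∨ s i = -1) →
      isingE J (fun i => Real.sign (xstar i)) ≤ isingE J s :=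
  stmt_8_general n J α β xstar hmin hvert
end

section
/- Let n ≥ 1, let J be a symmetric n×n real matrix with zero diagonal, let α, β > 0, and suppose μ = λ_min(J + αI) > 0. Let (x^(k)) be the DOCH iterates x^(k+1) = T(x^(k)) from any x^(0) ∈ ℝⁿ. Then the sequence (x^(k)) is bounded in ℝⁿ, the series ∑_{k=0}^∞ ‖x^(k+1) − x^(k)‖₂² converges, and ‖x^(k+1) − x^(k)‖₂ → 0 as k → ∞. -/
open Matrix Filter

lemma quad_decomp' {n : ℕ} (A : Matrix (Fin n) (Fin n) ℝ) (hA : A.IsHermitian)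
    (x : Fin n → ℝ) :
    (∃ c : Fin n → ℝ, (∑ i, x i ^ 2) = ∑ j, c j ^ 2 ∧
      x ⬝ᵥ A *ᵥ x = ∑ j, hA.eigenvalues j * c j ^ 2) := by
  classical
  set b := hA.eigenvectorBasis with hb
  set x' : EuclideanSpace ℝ (Fin n) := WithLp.toLp 2 x with hx'
  have hAt : Aᵀ = A := by
    rw [← Matrix.conjTranspose_eq_transpose_of_trivial]; exact hA
  refine ⟨fun j => inner (𝕜 := ℝ) (b j) x', ?_, ?_⟩
  · have h1 : (∑ i, x i ^ 2) = inner (𝕜 := ℝ) x' x' := by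
      rw [hx', PiLp.inner_apply]; simp [RCLike.inner_apply, sq, mul_comm]
    have h2 := b.sum_inner_mul_inner x' x'
    rw [h1, ← h2]
    refine Finset.sum_congr rfl fun j _ => ?_
    simp only [real_inner_comm x' (b j)]
    ring
  · have hsym : ∀ v w : Fin n → ℝ, v ⬝ᵥ A *ᵥ w = w ⬝ᵥ A *ᵥ v := by
      intro v w
      rw [dotProduct_mulVec, ← mulVec_transpose, hAt, dotProduct_comm]
    have h2 := b.sum_inner_mul_inner x' (WithLp.toLp 2 (A *ᵥ x : Fin n → ℝ) : EuclideanSpace ℝ (Fin n))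
    have h1 : x ⬝ᵥ A *ᵥ x
        = inner (𝕜 := ℝ) x' (WithLp.toLp 2 (A *ᵥ x : Fin n → ℝ) : EuclideanSpace ℝ (Fin n)) := by
      simp [hx', PiLp.inner_apply, RCLike.inner_apply, dotProduct, mul_comm]
    rw [h1, ← h2]
    refine Finset.sum_congr rfl fun j _ => ?_
    have h3 : inner (𝕜 := ℝ) (b j) (WithLp.toLp 2 (A *ᵥ x : Fin n → ℝ) : EuclideanSpace ℝ (Fin n))
        = hA.eigenvalues j * inner (𝕜 := ℝ) (b j) x' := by
      have h4 : (b j : Fin n → ℝ) ⬝ᵥ A *ᵥ x = (A *ᵥ (b j : Fin n → ℝ)) ⬝ᵥ x := by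
        rw [hsym, dotProduct_comm]
      have h5 : A *ᵥ (b j : Fin n → ℝ) = fun i => hA.eigenvalues j * b j i :=
        hA.mulVec_eigenvectorBasis j
      have h6 : (b j : Fin n → ℝ) ⬝ᵥ A *ᵥ x = hA.eigenvalues j * ((b j : Fin n → ℝ) ⬝ᵥ x) := by
        rw [h4, h5]
        simp [dotProduct, Finset.mul_sum, mul_assoc]
      simpa [hx', PiLp.inner_apply, RCLike.inner_apply, dotProduct, mul_comm] using h6
    rw [h3]
    simp only [real_inner_comm x' (b j)]
    ring

lemma quad_lb {n : ℕ} (A : Matrix (Fin n) (Fin n) ℝ) (hA : A.IsHermitian)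
    (x : Fin n → ℝ) :
    (⨅ i, hA.eigenvalues i) * (∑ i, x i ^ 2) ≤ x ⬝ᵥ A *ᵥ x := by
  obtain ⟨c, h1, h2⟩ := quad_decomp' A hA x
  rw [h1, h2, Finset.mul_sum]
  refine Finset.sum_le_sum fun j _ => ?_
  exact mul_le_mul_of_nonneg_right (ciInf_le (Set.finite_range _).bddBelow j) (sq_nonneg _)

lemma quad_ub {n : ℕ} (A : Matrix (Fin n) (Fin n) ℝ) (hA : A.IsHermitian)
    (x : Fin n → ℝ) :
    x ⬝ᵥ A *ᵥ x ≤ (⨆ i, hA.eigenvalues i) * (∑ i, x i ^ 2) := by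
  obtain ⟨c, h1, h2⟩ := quad_decomp' A hA x
  rw [h1, h2, Finset.mul_sum]
  refine Finset.sum_le_sum fun j _ => ?_
  exact mul_le_mul_of_nonneg_right (le_ciSup (Set.finite_range _).bddAbove j) (sq_nonneg _)

lemma quad_expand {n : ℕ} (A : Matrix (Fin n) (Fin n) ℝ) (hAt : Aᵀ = A) (u v : Fin n → ℝ) :
    u ⬝ᵥ A *ᵥ u = v ⬝ᵥ A *ᵥ v + (u - v) ⬝ᵥ A *ᵥ (u - v) + 2 * ((u - v) ⬝ᵥ A *ᵥ v) := by
  have hsym : ∀ a b : Fin n → ℝ, a ⬝ᵥ A *ᵥ b = b ⬝ᵥ A *ᵥ a := by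
    intro a b; rw [dotProduct_mulVec, ← mulVec_transpose, hAt, dotProduct_comm]
  have huv : v + (u - v) = u := by abel
  have h : u ⬝ᵥ A *ᵥ u = (v + (u - v)) ⬝ᵥ A *ᵥ (v + (u - v)) := by rw [huv]
  rw [h, mulVec_add, dotProduct_add, add_dotProduct, add_dotProduct,
    hsym v (u - v)]
  ring

set_option maxHeartbeats 1600000 in
theorem stmt_11 (n : ℕ) (hn : 1 ≤ n) (J : Matrix (Fin n) (Fin n) ℝ)
    (hJ : J.IsHermitian) (hJd : ∀ i, J i i = 0)
    (α β : ℝ) (hα : 0 < α) (hβ : 0 < β)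
    (hA : (J + α • (1 : Matrix (Fin n) (Fin n) ℝ)).IsHermitian)
    (hμ : 0 < ⨅ i, hA.eigenvalues i)
    (T : (Fin n → ℝ) → (Fin n → ℝ))
    (hT : ∀ y : Fin n → ℝ, ∀ i, (T y i) ^ 3 = β⁻¹ * ((J + α • 1) *ᵥ y) i)
    (x : ℕ → Fin n → ℝ) (hx : ∀ k, x (k + 1) = T (x k)) :
    (∃ B : ℝ, ∀ k, Real.sqrt (∑ i, x k i ^ 2) ≤ B) ∧
      Summable (fun k => ∑ i, (x (k + 1) i - x k i) ^ 2) ∧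
      Tendsto (fun k => Real.sqrt (∑ i, (x (k + 1) i - x k i) ^ 2)) atTop (nhds 0) := by
  classical
  have hne : Nonempty (Fin n) := ⟨⟨0, hn⟩⟩
  set A : Matrix (Fin n) (Fin n) ℝ := J + α • (1 : Matrix (Fin n) (Fin n) ℝ) with hAdef
  set μ : ℝ := ⨅ i, hA.eigenvalues i with hμdef
  set M : ℝ := ⨆ i, hA.eigenvalues i with hMdef
  have hAt : Aᵀ = A := by
    rw [← Matrix.conjTranspose_eq_transpose_of_trivial]; exact hA
  have hμM : μ ≤ M := by
    have j : Fin n := ⟨0, hn⟩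
    exact le_trans (ciInf_le (Set.finite_range _).bddBelow j)
      (le_ciSup (Set.finite_range _).bddAbove j)
  have hM : 0 < M := lt_of_lt_of_le hμ hμM
  -- the Hamiltonian
  set H : (Fin n → ℝ) → ℝ :=
    fun v => β / 4 * (∑ i, v i ^ 4) - (v ⬝ᵥ A *ᵥ v) / 2 with hHdef
  -- cube relation
  have hcube : ∀ k i, β * (x (k + 1) i) ^ 3 = (A *ᵥ x k) i := by
    intro k i
    have h := hT (x k) i
    rw [← hx k] at h
    rw [h]
    field_simp
  -- descent inequality
  have hdescent : ∀ k,
      H (x (k + 1)) + μ / 2 * (∑ i, (x (k + 1) i - x k i) ^ 2) ≤ H (x k) := by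
    intro k
    set u := x (k + 1)
    set v := x k
    have hQ := quad_expand A hAt u v
    have hlin : (u - v) ⬝ᵥ A *ᵥ v = ∑ i, (A *ᵥ v) i * (u i - v i) := by
      simp [dotProduct, Pi.sub_apply, mul_comm]
    have hd2 : μ * (∑ i, (u i - v i) ^ 2) ≤ (u - v) ⬝ᵥ A *ᵥ (u - v) := by
      have := quad_lb A hA (u - v)
      simpa [Pi.sub_apply] using this
    have hkey : β / 4 * (∑ i, u i ^ 4) - β / 4 * (∑ i, v i ^ 4)
        - ∑ i, (A *ᵥ v) i * (u i - v i) ≤ 0 := by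
      have hAv : (∑ i, (A *ᵥ v) i * (u i - v i)) = ∑ i, β * u i ^ 3 * (u i - v i) :=
        Finset.sum_congr rfl fun i _ => by rw [← hcube k i]
      have hrw : β / 4 * (∑ i, u i ^ 4) - β / 4 * (∑ i, v i ^ 4)
          - ∑ i, (A *ᵥ v) i * (u i - v i)
          = ∑ i, (β / 4 * u i ^ 4 - β / 4 * v i ^ 4 - β * u i ^ 3 * (u i - v i)) := by
        rw [hAv]
        simp only [Finset.sum_sub_distrib, Finset.mul_sum]
      rw [hrw]
      refine Finset.sum_nonpos fun i _ => ?_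
      nlinarith [mul_nonneg hβ.le (mul_nonneg (sq_nonneg (u i - v i)) (sq_nonneg (u i + v i))),
        mul_nonneg hβ.le (mul_nonneg (sq_nonneg (u i - v i)) (sq_nonneg (u i)))]
    simp only [hHdef]
    rw [hlin] at hQ
    linarith [hd2, hkey, hQ]
  -- lower bound of H
  have hlow : ∀ v : Fin n → ℝ, -((n : ℝ) * M ^ 2 / (4 * β)) ≤ H v := by
    intro v
    have hub := quad_ub A hA v
    have h1 : ∑ _i : Fin n, (-(M ^ 2 / (4 * β))) ≤ ∑ i, (β / 4 * v i ^ 4 - M / 2 * v i ^ 2) := by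
      refine Finset.sum_le_sum fun i _ => ?_
      rw [neg_le, le_div_iff₀ (by linarith : (0:ℝ) < 4 * β)]
      nlinarith [sq_nonneg (β * v i ^ 2 - M)]
    rw [Finset.sum_const, Finset.card_univ, Fintype.card_fin] at h1
    simp only [hHdef]
    have h2 : M / 2 * (∑ i, v i ^ 2) = ∑ i, M / 2 * v i ^ 2 := by rw [Finset.mul_sum]
    have h3 : β / 4 * (∑ i, v i ^ 4) = ∑ i, β / 4 * v i ^ 4 := by rw [Finset.mul_sum]
    have h4 : ∑ i, (β / 4 * v i ^ 4 - M / 2 * v i ^ 2)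
        = β / 4 * (∑ i, v i ^ 4) - M / 2 * (∑ i, v i ^ 2) := by
      rw [Finset.sum_sub_distrib, h2, h3]
    rw [h4] at h1
    have h5 : n • (-(M ^ 2 / (4 * β))) = -((n : ℝ) * M ^ 2 / (4 * β)) := by
      rw [nsmul_eq_mul]; ring
    rw [h5] at h1
    nlinarith [hub]
  set L : ℝ := (n : ℝ) * M ^ 2 / (4 * β) with hLdef
  have hD0 : ∀ k, (0:ℝ) ≤ ∑ i, (x (k + 1) i - x k i) ^ 2 :=
    fun k => Finset.sum_nonneg fun i _ => sq_nonneg _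
  -- partial sums
  have hpsum : ∀ N, μ / 2 * (∑ k ∈ Finset.range N, ∑ i, (x (k + 1) i - x k i) ^ 2)
      ≤ H (x 0) - H (x N) := by
    intro N
    induction N with
    | zero => simp
    | succ N ih =>
      rw [Finset.sum_range_succ, mul_add]
      have := hdescent N
      linarith
  have hC : ∀ N, (∑ k ∈ Finset.range N, ∑ i, (x (k + 1) i - x k i) ^ 2)
      ≤ (H (x 0) + L) / (μ / 2) := by
    intro N
    rw [le_div_iff₀ (by linarith : (0:ℝ) < μ / 2)]
    have h1 := hpsum N
    have h2 := hlow (x N)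
    rw [mul_comm]
    simp only [hLdef] at h2 ⊢
    linarith
  have hsummable : Summable (fun k => ∑ i, (x (k + 1) i - x k i) ^ 2) :=
    summable_of_sum_range_le hD0 hC
  have htend : Tendsto (fun k => ∑ i, (x (k + 1) i - x k i) ^ 2) atTop (nhds 0) :=
    hsummable.tendsto_atTop_zero
  clear_value A μ M H L
  refine ⟨?_, hsummable, ?_⟩
  · -- boundedness
    have hmono : ∀ k, H (x k) ≤ H (x 0) := by
      intro k
      induction k with
      | zero => exact le_refl _
      | succ k ih =>
        have h1 := hdescent k
        have h2 : (0:ℝ) ≤ μ / 2 * (∑ i, (x (k + 1) i - x k i) ^ 2) :=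
          mul_nonneg (by linarith) (hD0 k)
        linarith
    set c : ℝ := β / (4 * n) with hcdef
    have hc : 0 < c := by
      apply div_pos hβ
      have : (0:ℝ) < n := by exact_mod_cast hn
      linarith
    set C : ℝ := max (H (x 0)) 0 with hCdef
    have hC0 : 0 ≤ C := le_max_right _ _
    set B0 : ℝ := (C + M / 2 + c) / c with hB0def
    clear_value c C B0
    have hcB0 : c * B0 = C + M / 2 + c := by
      rw [hB0def]; field_simp
    refine ⟨Real.sqrt B0, fun k => ?_⟩
    have hs : ∑ i, x k i ^ 2 ≤ B0 := by
      set s : ℝ := ∑ i, x k i ^ 2 with hsdef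
      have hs0 : 0 ≤ s := Finset.sum_nonneg fun i _ => sq_nonneg _
      -- Cauchy-Schwarz : s^2 ≤ n * ∑ x^4
      have hcs : s ^ 2 ≤ (n : ℝ) * ∑ i, x k i ^ 4 := by
        have h := sq_sum_le_card_mul_sum_sq (s := (Finset.univ : Finset (Fin n)))
          (f := fun i => x k i ^ 2)
        simp only [Finset.card_univ, Fintype.card_fin] at h
        calc s ^ 2 = (∑ i, x k i ^ 2) ^ 2 := by rw [hsdef]
          _ ≤ (n : ℝ) * ∑ i, (x k i ^ 2) ^ 2 := by exact_mod_cast h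
          _ = (n : ℝ) * ∑ i, x k i ^ 4 := by
              congr 1; exact Finset.sum_congr rfl fun i _ => by ring
      have hub := quad_ub A hA (x k)
      have hHk : c * s ^ 2 - M / 2 * s ≤ H (x k) := by
        simp only [hHdef]
        have hn' : (0:ℝ) < n := by exact_mod_cast hn
        have h1 : c * s ^ 2 ≤ β / 4 * (∑ i, x k i ^ 4) := by
          rw [hcdef]
          rw [div_mul_eq_mul_div, div_le_iff₀ (by linarith : (0:ℝ) < 4 * n)]
          nlinarith [hcs, hβ]
        nlinarith [hub]
      have hq : c * s ^ 2 ≤ C + M / 2 * s := by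
        have := hmono k
        have hCle : H (x 0) ≤ C := by rw [hCdef]; exact le_max_left _ _
        linarith
      by_contra hcon
      push_neg at hcon
      have hgt : c * s > C + M / 2 + c := by
        calc C + M / 2 + c = c * B0 := hcB0.symm
          _ < c * s := by exact mul_lt_mul_of_pos_left hcon hc
      have hs1 : 1 < s := by nlinarith
      nlinarith [mul_pos hc (by linarith : (0:ℝ) < s)]
    exact Real.sqrt_le_sqrt hs
  · -- sqrt tends to 0
    have h := (Real.continuous_sqrt.tendsto' 0 0 Real.sqrt_zero).comp htend
    exact h
end

section
/- Let n ≥ 1, let J be a symmetric n×n real matrix with zero diagonal, let α, β > 0, and suppose μ = λ_min(J + αI) > 0. Let (x^(k)) be the DOCH iterates x^(k+1) = T(x^(k)) from any x^(0) ∈ ℝⁿ. Then every limit point x* of the sequence (x^(k)) is a critical point of the Hamiltonian H, i.e. ∇H(x*) = 0, where ∇H(x)_i = β x_i³ − ((J + αI)x)_i. -/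
open Matrix Filter

lemma doch_psd (n : ℕ) (A : Matrix (Fin n) (Fin n) ℝ) (hA : A.IsHermitian) (μ : ℝ)
    (hle : ∀ i, μ ≤ hA.eigenvalues i) : PosSemidef (A - μ • 1) := by
  have hU := (Matrix.mem_unitaryGroup_iff).mp (hA.eigenvectorUnitary).2
  have key : A - μ • 1 = (hA.eigenvectorUnitary : Matrix (Fin n) (Fin n) ℝ) *
      diagonal (fun i => hA.eigenvalues i - μ) *
      (star (hA.eigenvectorUnitary : Matrix (Fin n) (Fin n) ℝ)) := by
    have hs := hA.spectral_theorem; rw [Unitary.conjStarAlgAut_apply] at hs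
    have hd : diagonal (fun i => hA.eigenvalues i - μ) =
        diagonal (RCLike.ofReal ∘ hA.eigenvalues) - μ • (1 : Matrix (Fin n) (Fin n) ℝ) := by
      have : (μ • (1 : Matrix (Fin n) (Fin n) ℝ)) = diagonal (fun _ => μ) := by
        ext i j
        by_cases h : i = j <;> simp [Matrix.one_apply, h]
      rw [this, ← diagonal_sub]
      rfl
    rw [hd, Matrix.mul_sub, Matrix.sub_mul, ← hs]
    congr 1
    rw [Matrix.mul_smul, Matrix.smul_mul, Matrix.mul_one, hU]
  rw [key]
  exact (posSemidef_diagonal_iff.mpr fun i => by linarith [hle i]).mul_mul_conjTranspose_same _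

set_option maxHeartbeats 1000000 in
theorem stmt_12 (n : ℕ) (hn : 1 ≤ n) (J : Matrix (Fin n) (Fin n) ℝ)
    (hJ : J.IsHermitian) (hJd : ∀ i, J i i = 0)
    (α β : ℝ) (hα : 0 < α) (hβ : 0 < β)
    (hA : (J + α • (1 : Matrix (Fin n) (Fin n) ℝ)).IsHermitian)
    (hμ : 0 < ⨅ i, hA.eigenvalues i)
    (T : (Fin n → ℝ) → (Fin n → ℝ))
    (hT : ∀ y : Fin n → ℝ, ∀ i, (T y i) ^ 3 = β⁻¹ * ((J + α • 1) *ᵥ y) i)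
    (x : ℕ → Fin n → ℝ) (hx : ∀ k, x (k + 1) = T (x k)) :
    ∀ xstar : Fin n → ℝ,
      (∃ φ : ℕ → ℕ, StrictMono φ ∧
        Tendsto (fun k => x (φ k)) atTop (nhds xstar)) →
      ∀ i, β * xstar i ^ 3 - ((J + α • 1) *ᵥ xstar) i = 0 := by
  intro xstar hx'
  obtain ⟨φ, hφ, hconv⟩ := hx'
  set A := J + α • (1 : Matrix (Fin n) (Fin n) ℝ) with hAdef
  set μ := ⨅ i, hA.eigenvalues i with hμdef
  -- symmetry of the quadratic form
  have hsymA : Aᵀ = A := hA.eq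
  have hsym : ∀ v w : Fin n → ℝ, v ⬝ᵥ A *ᵥ w = w ⬝ᵥ A *ᵥ v := by
    intro v w
    rw [Matrix.dotProduct_mulVec, ← hsymA, Matrix.vecMul_transpose, hsymA,
      dotProduct_comm]
  -- quadratic form lower bound
  have hquad : ∀ v : Fin n → ℝ, μ * ∑ j, (v j) ^ 2 ≤ v ⬝ᵥ A *ᵥ v := by
    intro v
    have hpsd := doch_psd n A hA μ (fun i => ciInf_le (Set.Finite.bddBelow
      (Set.finite_range _)) i)
    have h0 := hpsd.dotProduct_mulVec_nonneg v
    have hst : star v = v := by funext j; simp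
    rw [hst, Matrix.sub_mulVec, Matrix.smul_mulVec, Matrix.one_mulVec,
      dotProduct_sub, dotProduct_smul] at h0
    have hvv : v ⬝ᵥ v = ∑ j, (v j) ^ 2 := by
      simp [dotProduct, sq]
    rw [hvv] at h0
    simpa [smul_eq_mul] using sub_nonneg.mp h0
  -- the Hamiltonian
  set H : (Fin n → ℝ) → ℝ :=
    fun v => β / 4 * ∑ j, (v j) ^ 4 - 1 / 2 * (v ⬝ᵥ A *ᵥ v) with hHdef
  have hHcont : Continuous H := by
    have hdp : ∀ v : Fin n → ℝ, v ⬝ᵥ A *ᵥ v = ∑ j, v j * ∑ k, A j k * v k := by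
      intro v; simp [dotProduct, Matrix.mulVec]
    have : H = fun v => β / 4 * ∑ j, (v j) ^ 4 -
        1 / 2 * ∑ j, v j * ∑ k, A j k * v k := by
      funext v; simp only [hHdef]; rw [hdp]
    rw [this]
    continuity
  -- descent inequality
  have hdesc : ∀ y : Fin n → ℝ,
      H (T y) + 1 / 2 * ((y - T y) ⬝ᵥ A *ᵥ (y - T y)) ≤ H y := by
    intro y
    set u := T y with hu
    have hcube : ∀ i, (A *ᵥ y) i = β * (u i) ^ 3 := by
      intro i
      have := hT y i
      field_simp at this
      linarith [this]
    -- convexity of the quartic part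
    have hconv4 : (A *ᵥ y) ⬝ᵥ (y - u) ≤ β / 4 * ∑ j, (y j) ^ 4 - β / 4 * ∑ j, (u j) ^ 4 := by
      have hpt : ∀ j, (A *ᵥ y) j * (y j - u j) ≤ β / 4 * (y j) ^ 4 - β / 4 * (u j) ^ 4 := by
        intro j
        rw [hcube j]
        nlinarith [mul_nonneg (mul_nonneg hβ.le (sq_nonneg (y j - u j))) (sq_nonneg (y j + u j)),
          mul_nonneg (mul_nonneg hβ.le (sq_nonneg (y j - u j))) (sq_nonneg (u j))]
      calc (A *ᵥ y) ⬝ᵥ (y - u) = ∑ j, (A *ᵥ y) j * (y j - u j) := by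
            simp [dotProduct]
        _ ≤ ∑ j, (β / 4 * (y j) ^ 4 - β / 4 * (u j) ^ 4) := Finset.sum_le_sum fun j _ => hpt j
        _ = β / 4 * ∑ j, (y j) ^ 4 - β / 4 * ∑ j, (u j) ^ 4 := by
            rw [Finset.sum_sub_distrib, Finset.mul_sum, Finset.mul_sum]
    -- algebra of the quadratic forms
    have hexp : (y - u) ⬝ᵥ A *ᵥ (y - u) =
        y ⬝ᵥ A *ᵥ y - 2 * (y ⬝ᵥ A *ᵥ u) + u ⬝ᵥ A *ᵥ u := by
      rw [Matrix.mulVec_sub, dotProduct_sub, sub_dotProduct,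
        sub_dotProduct, hsym u y]
      ring
    have hAy : (A *ᵥ y) ⬝ᵥ (y - u) = y ⬝ᵥ A *ᵥ y - y ⬝ᵥ A *ᵥ u := by
      rw [dotProduct_sub, dotProduct_comm (A *ᵥ y) y,
        dotProduct_comm (A *ᵥ y) u, hsym u y]
    have hyAu : y ⬝ᵥ A *ᵥ y - y ⬝ᵥ A *ᵥ u ≤
        β / 4 * ∑ j, (y j) ^ 4 - β / 4 * ∑ j, (u j) ^ 4 := by
      rw [← hAy]; exact hconv4
    rw [hHdef]
    dsimp only
    rw [hexp]
    linarith
  clear_value A μ H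
  -- one-step decrease with the quantified gap
  have hstep : ∀ k : ℕ, μ * ∑ j, (x k j - x (k + 1) j) ^ 2 ≤ 2 * (H (x k) - H (x (k + 1))) := by
    intro k
    have h1 := hdesc (x k)
    rw [← hx k] at h1
    have h2 := hquad (x k - x (k + 1))
    have h3 : μ * ∑ j, (x k j - x (k + 1) j) ^ 2 = μ * ∑ j, ((x k - x (k + 1)) j) ^ 2 := rfl
    rw [h3]
    linarith
  have hanti : ∀ k, H (x (k + 1)) ≤ H (x k) := by
    intro k
    have h1 := hstep k
    have h2 : 0 ≤ μ * ∑ j, (x k j - x (k + 1) j) ^ 2 :=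
      mul_nonneg hμ.le (Finset.sum_nonneg fun j _ => sq_nonneg _)
    linarith
  have hmono : ∀ {k m : ℕ}, k ≤ m → H (x m) ≤ H (x k) := by
    intro k m hkm
    exact antitone_nat_of_succ_le (f := fun k => H (x k)) hanti hkm
  -- limits of H along the subsequence
  have h1 : Tendsto (fun k => H (x (φ k))) atTop (nhds (H xstar)) :=
    (hHcont.tendsto xstar).comp hconv
  have h2 : Tendsto (fun k => H (x (φ (k + 1)))) atTop (nhds (H xstar)) :=
    h1.comp (tendsto_add_atTop_nat 1)
  have hb : Tendsto (fun k => H (x (φ k + 1))) atTop (nhds (H xstar)) := by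
    refine tendsto_of_tendsto_of_tendsto_of_le_of_le h2 h1 (fun k => ?_) (fun k => ?_)
    · exact hmono (Nat.succ_le_of_lt (hφ (Nat.lt_succ_self k)))
    · exact hanti (φ k)
  have hdiff : Tendsto (fun k => H (x (φ k)) - H (x (φ k + 1))) atTop (nhds 0) := by
    have := h1.sub hb
    simpa using this
  -- sums of squares of successive differences go to zero
  have hS : Tendsto (fun k => ∑ j, (x (φ k) j - x (φ k + 1) j) ^ 2) atTop (nhds 0) := by
    have hub : ∀ k, ∑ j, (x (φ k) j - x (φ k + 1) j) ^ 2 ≤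
        2 / μ * (H (x (φ k)) - H (x (φ k + 1))) := by
      intro k
      have := hstep (φ k)
      rw [div_mul_eq_mul_div, le_div_iff₀ hμ]
      linarith
    have hlb : ∀ k, (0:ℝ) ≤ ∑ j, (x (φ k) j - x (φ k + 1) j) ^ 2 :=
      fun k => Finset.sum_nonneg fun j _ => sq_nonneg _
    have hub' : Tendsto (fun k => 2 / μ * (H (x (φ k)) - H (x (φ k + 1)))) atTop (nhds 0) := by
      have := hdiff.const_mul (2 / μ)
      simpa using this
    exact tendsto_of_tendsto_of_tendsto_of_le_of_le tendsto_const_nhds hub' hlb hub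
  -- each coordinate of the successor subsequence converges to xstar
  have hcoord : ∀ j, Tendsto (fun k => x (φ k) j) atTop (nhds (xstar j)) :=
    fun j => tendsto_pi_nhds.mp hconv j
  have hcoord' : ∀ j, Tendsto (fun k => x (φ k + 1) j) atTop (nhds (xstar j)) := by
    intro j
    have hsq : Tendsto (fun k => (x (φ k) j - x (φ k + 1) j) ^ 2) atTop (nhds 0) := by
      refine tendsto_of_tendsto_of_tendsto_of_le_of_le (g := fun _ => (0:ℝ))
        tendsto_const_nhds hS (fun k => sq_nonneg _) (fun k => ?_)
      exact Finset.single_le_sum (f := fun m => (x (φ k) m - x (φ k + 1) m) ^ 2)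
        (fun m _ => sq_nonneg _) (Finset.mem_univ j)
    have habs : Tendsto (fun k => |x (φ k) j - x (φ k + 1) j|) atTop (nhds 0) := by
      have h' := (Real.continuous_sqrt.tendsto 0).comp hsq
      rw [Real.sqrt_zero] at h'
      exact h'.congr fun k => Real.sqrt_sq_eq_abs _
    have hneg : Tendsto (fun k => -|x (φ k) j - x (φ k + 1) j|) atTop (nhds 0) := by
      simpa using habs.neg
    have hd0 : Tendsto (fun k => x (φ k) j - x (φ k + 1) j) atTop (nhds 0) := by
      refine tendsto_of_tendsto_of_tendsto_of_le_of_le hneg habs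
        (fun k => neg_abs_le _) (fun k => le_abs_self _)
    have := (hcoord j).sub hd0
    simpa using this
  -- pass to the limit in the cube-root fixed point relation
  intro i
  have hlim1 : Tendsto (fun k => (x (φ k + 1) i) ^ 3) atTop (nhds ((xstar i) ^ 3)) :=
    (hcoord' i).pow 3
  have heq : ∀ k, (x (φ k + 1) i) ^ 3 = β⁻¹ * (A *ᵥ x (φ k)) i := by
    intro k
    rw [hx (φ k)]
    exact hT (x (φ k)) i
  have hlim2 : Tendsto (fun k => (x (φ k + 1) i) ^ 3) atTop (nhds (β⁻¹ * (A *ᵥ xstar) i)) := by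
    have hmv : Tendsto (fun k => (A *ᵥ x (φ k)) i) atTop (nhds ((A *ᵥ xstar) i)) := by
      have : ∀ v : Fin n → ℝ, (A *ᵥ v) i = ∑ j, A i j * v j := by
        intro v; simp [Matrix.mulVec, dotProduct]
      simp only [this]
      exact tendsto_finset_sum _ fun j _ => (tendsto_const_nhds).mul (hcoord j)
    have := hmv.const_mul β⁻¹
    refine this.congr' ?_
    filter_upwards with k
    exact (heq k).symm
  have hfinal : (xstar i) ^ 3 = β⁻¹ * (A *ᵥ xstar) i :=
    tendsto_nhds_unique hlim1 hlim2
  rw [hfinal]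
  field_simp
  ring
end

section
/- Let n ≥ 1, let J be a symmetric n×n real matrix with zero diagonal, let α, β > 0 with λ_min(J + αI) > 0, and set σ = λ_max(J + αI). Let (x^(k)) be the DOCH iterates x^(k+1) = T(x^(k)). Then for every k ≥ 1, ‖∇H(x^(k))‖₂ ≤ σ·‖x^(k) − x^(k−1)‖₂, where ∇H(x)_i = β x_i³ − ((J + αI)x)_i. -/
open Matrix

lemma parseval_aux {n : ℕ} [Nonempty (Fin n)] (A : Matrix (Fin n) (Fin n) ℝ)
    (hA : A.IsHermitian) (w : EuclideanSpace ℝ (Fin n)) :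
    ∑ i, (w i) ^ 2 = ∑ j, (inner (𝕜 := ℝ) (hA.eigenvectorBasis j) w) ^ 2 := by
  have h := hA.eigenvectorBasis.sum_inner_mul_inner w w
  calc ∑ i, (w i) ^ 2 = inner (𝕜 := ℝ) w w := by
        simp only [PiLp.inner_apply, RCLike.inner_apply, conj_trivial, sq, mul_comm]
    _ = ∑ j, (inner (𝕜 := ℝ) (hA.eigenvectorBasis j) w) ^ 2 := by
        rw [← h]
        refine Finset.sum_congr rfl fun j _ => ?_
        rw [real_inner_comm w, sq]

lemma eig_aux {n : ℕ} [Nonempty (Fin n)] (A : Matrix (Fin n) (Fin n) ℝ)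
    (hA : A.IsHermitian) (v : EuclideanSpace ℝ (Fin n)) (j : Fin n) :
    inner (𝕜 := ℝ) (hA.eigenvectorBasis j) (WithLp.toLp 2 (A *ᵥ v))
      = hA.eigenvalues j * inner (𝕜 := ℝ) (hA.eigenvectorBasis j) v := by
  have hsym : ∀ i l, A i l = A l i := fun i l => by simpa using hA.apply l i
  have key : ∑ i, (hA.eigenvectorBasis j) i * (A *ᵥ v) i
      = ∑ i, (A *ᵥ ⇑(hA.eigenvectorBasis j)) i * v i := by
    simp only [mulVec, dotProduct, Finset.mul_sum, Finset.sum_mul]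
    rw [Finset.sum_comm]
    refine Finset.sum_congr rfl fun i _ => Finset.sum_congr rfl fun l _ => ?_
    rw [hsym l i]; ring
  have heig := hA.mulVec_eigenvectorBasis j
  simp only [PiLp.inner_apply, RCLike.inner_apply, starRingEnd_apply, star_trivial]
  rw [Finset.sum_congr rfl fun i _ => mul_comm ((A *ᵥ v.ofLp) i) _, key, heig]
  simp [Finset.mul_sum, mul_comm, mul_assoc, mul_left_comm]

lemma opnorm_aux {n : ℕ} (hn : 1 ≤ n) (A : Matrix (Fin n) (Fin n) ℝ)
    (hA : A.IsHermitian) (hpos : ∀ i, 0 ≤ hA.eigenvalues i) (v : Fin n → ℝ) :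
    Real.sqrt (∑ i, ((A *ᵥ v) i) ^ 2)
      ≤ (⨆ i, hA.eigenvalues i) * Real.sqrt (∑ i, (v i) ^ 2) := by
  haveI : Nonempty (Fin n) := ⟨⟨0, hn⟩⟩
  set σ := ⨆ i, hA.eigenvalues i with hσ
  have hle : ∀ j, hA.eigenvalues j ≤ σ := fun j =>
    le_ciSup (Set.Finite.bddAbove (Set.finite_range _)) j
  have hσ0 : 0 ≤ σ := le_trans (hpos (Classical.arbitrary _)) (hle _)
  have h1 := parseval_aux A hA (WithLp.toLp 2 v)
  have h2 := parseval_aux A hA (WithLp.toLp 2 (A *ᵥ v))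
  have h3 : ∑ i, ((A *ᵥ v) i) ^ 2 ≤ σ ^ 2 * ∑ i, (v i) ^ 2 := by
    rw [h2, h1, Finset.mul_sum]
    refine Finset.sum_le_sum fun j _ => ?_
    rw [eig_aux A hA _ j, mul_pow]
    have : hA.eigenvalues j ^ 2 ≤ σ ^ 2 := by
      apply sq_le_sq' <;> nlinarith [hpos j, hle j]
    nlinarith [sq_nonneg (inner (𝕜 := ℝ) (hA.eigenvectorBasis j)
      (WithLp.toLp 2 v))]
  calc Real.sqrt (∑ i, ((A *ᵥ v) i) ^ 2) ≤ Real.sqrt (σ ^ 2 * ∑ i, (v i) ^ 2) :=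
        Real.sqrt_le_sqrt h3
    _ = σ * Real.sqrt (∑ i, (v i) ^ 2) := by
        rw [Real.sqrt_mul (sq_nonneg σ), Real.sqrt_sq hσ0]

theorem stmt_13 (n : ℕ) (hn : 1 ≤ n) (J : Matrix (Fin n) (Fin n) ℝ)
    (hJ : J.IsHermitian) (hJd : ∀ i, J i i = 0)
    (α β : ℝ) (hα : 0 < α) (hβ : 0 < β)
    (hA : (J + α • (1 : Matrix (Fin n) (Fin n) ℝ)).IsHermitian)
    (hμ : 0 < ⨅ i, hA.eigenvalues i)
    (T : (Fin n → ℝ) → (Fin n → ℝ))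
    (hT : ∀ y : Fin n → ℝ, ∀ i, (T y i) ^ 3 = β⁻¹ * ((J + α • 1) *ᵥ y) i)
    (x : ℕ → Fin n → ℝ) (hx : ∀ k, x (k + 1) = T (x k)) :
    ∀ k : ℕ, 1 ≤ k →
      Real.sqrt (∑ i, (β * x k i ^ 3 - ((J + α • 1) *ᵥ x k) i) ^ 2)
        ≤ (⨆ i, hA.eigenvalues i) * Real.sqrt (∑ i, (x k i - x (k - 1) i) ^ 2) := by
  haveI : Nonempty (Fin n) := ⟨⟨0, hn⟩⟩
  intro k hk
  obtain ⟨m, rfl⟩ : ∃ m, k = m + 1 := ⟨k - 1, (Nat.succ_pred_eq_of_pos hk).symm⟩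
  set A := J + α • (1 : Matrix (Fin n) (Fin n) ℝ) with hAdef
  have hpos : ∀ i, 0 ≤ hA.eigenvalues i := fun i =>
    le_of_lt (lt_of_lt_of_le hμ (ciInf_le (Set.Finite.bddBelow (Set.finite_range _)) i))
  have hgrad : ∀ i, β * x (m + 1) i ^ 3 - (A *ᵥ x (m + 1)) i
      = -((A *ᵥ (x (m + 1) - x m)) i) := by
    intro i
    have h1 : (x (m + 1) i) ^ 3 = β⁻¹ * (A *ᵥ x m) i := by
      rw [hx m]; exact hT (x m) i
    have : (A *ᵥ (x (m + 1) - x m)) i = (A *ᵥ x (m + 1)) i - (A *ᵥ x m) i := by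
      rw [mulVec_sub]; rfl
    rw [this, h1]
    field_simp
    ring
  have hsq : ∀ i, (β * x (m + 1) i ^ 3 - (A *ᵥ x (m + 1)) i) ^ 2
      = ((A *ᵥ (x (m + 1) - x m)) i) ^ 2 := fun i => by rw [hgrad i, neg_sq]
  have key := opnorm_aux hn A hA hpos (x (m + 1) - x m)
  simp only [Nat.add_sub_cancel]
  calc Real.sqrt (∑ i, (β * x (m + 1) i ^ 3 - (A *ᵥ x (m + 1)) i) ^ 2)
      = Real.sqrt (∑ i, ((A *ᵥ (x (m + 1) - x m)) i) ^ 2) := by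
        congr 1; exact Finset.sum_congr rfl fun i _ => hsq i
    _ ≤ (⨆ i, hA.eigenvalues i) * Real.sqrt (∑ i, ((x (m + 1) - x m) i) ^ 2) := key
    _ = (⨆ i, hA.eigenvalues i) * Real.sqrt (∑ i, (x (m + 1) i - x m i) ^ 2) := rfl
end

section
/- Let n ≥ 1, let J be a symmetric n×n real matrix with zero diagonal, let α, β > 0, and suppose μ = λ_min(J + αI) > 0. Let (x^(k)) be the DOCH iterates x^(k+1) = T(x^(k)) from any x^(0) ∈ ℝⁿ. Then the sequence (x^(k)) converges to a point x* ∈ ℝⁿ which is a critical point of the Hamiltonian H, i.e. β (x*_i)³ = ((J + αI)x*)_i for every i. -/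
open Matrix MvPolynomial Filter Topology

lemma psd_shift {m : ℕ} {A : Matrix (Fin m) (Fin m) ℝ} (hA : A.IsHermitian) {μ : ℝ}
    (hμle : ∀ i, μ ≤ hA.eigenvalues i) : (A - μ • 1).PosSemidef := by
  set U : Matrix (Fin m) (Fin m) ℝ := (hA.eigenvectorUnitary : Matrix (Fin m) (Fin m) ℝ) with hU
  have hspec := hA.spectral_theorem
  have hdiag : diagonal (RCLike.ofReal ∘ hA.eigenvalues) = diagonal hA.eigenvalues := by
    congr 1
  rw [hdiag] at hspec
  rw [Unitary.conjStarAlgAut_apply, ← hU] at hspec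
  have hUU : U * star U = 1 := (Matrix.mem_unitaryGroup_iff).mp hA.eigenvectorUnitary.2
  have hsm : (μ • (1 : Matrix (Fin m) (Fin m) ℝ)) = diagonal (fun _ => μ) := by
    ext i j
    simp [Matrix.one_apply, Matrix.diagonal_apply]
  have h1 : A - μ • 1 = U * (diagonal (fun i => hA.eigenvalues i - μ)) * star U := by
    have h2 : diagonal (fun i => hA.eigenvalues i - μ)
        = diagonal hA.eigenvalues - μ • (1 : Matrix (Fin m) (Fin m) ℝ) := by
      rw [hsm, Matrix.diagonal_sub]
    rw [h2, Matrix.mul_sub, Matrix.sub_mul, ← hspec, Matrix.mul_smul, Matrix.smul_mul,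
      Matrix.mul_one, hUU]
  rw [h1]
  exact (Matrix.posSemidef_diagonal_iff.mpr (fun i => sub_nonneg.mpr (hμle i))).mul_mul_conjTranspose_same U

lemma quad_lower {m : ℕ} {A : Matrix (Fin m) (Fin m) ℝ} (hA : A.IsHermitian) {μ : ℝ}
    (hμle : ∀ i, μ ≤ hA.eigenvalues i) (v : Fin m → ℝ) :
    μ * (∑ i, v i ^ 2) ≤ v ⬝ᵥ (A *ᵥ v) := by
  have h := (psd_shift hA hμle).re_dotProduct_nonneg v
  simp only [star_trivial, RCLike.re_to_real] at h
  have hexp : v ⬝ᵥ ((A - μ • 1) *ᵥ v) = v ⬝ᵥ (A *ᵥ v) - μ * (∑ i, v i ^ 2) := by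
    rw [Matrix.sub_mulVec, dotProduct_sub]
    congr 1
    rw [Matrix.smul_mulVec, Matrix.one_mulVec, dotProduct_smul]
    simp [dotProduct, pow_two, Finset.mul_sum]
  rw [hexp] at h
  linarith

-- helper: d i ≤ total degree
lemma le_fsum {m : ℕ} (d : Fin m →₀ ℕ) (i : Fin m) : d i ≤ d.sum (fun _ k => k) := by
  by_cases h : d i = 0
  · simp [h]
  · exact Finset.single_le_sum (fun a _ => Nat.zero_le _) (Finsupp.mem_support_iff.mpr h)

lemma fsum_add {m : ℕ} (d e : Fin m →₀ ℕ) :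
    (d + e).sum (fun _ k => k) = d.sum (fun _ k => k) + e.sum (fun _ k => k) :=
  Finsupp.sum_add_index' (fun _ => rfl) (fun _ _ _ => rfl)

lemma fsum_single {m : ℕ} (i : Fin m) (k : ℕ) :
    (Finsupp.single i k).sum (fun _ k => k) = k := by
  simp [Finsupp.sum_single_index]

lemma span_top {m : ℕ} (A : Matrix (Fin m) (Fin m) ℝ) {β : ℝ} (hβ : β ≠ 0) :
    (Submodule.span ℝ (Set.range fun d : Fin m → Fin 3 =>
        (monomial (Finsupp.equivFunOnFinite.symm fun i => ((d i : ℕ))) (1:ℝ) : MvPolynomial (Fin m) ℝ)))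
      ⊔ (Submodule.restrictScalars ℝ (Ideal.span (Set.range fun i =>
          (C β * X i ^ 3 - ∑ j, C (A i j) * X j : MvPolynomial (Fin m) ℝ)))) = ⊤ := by
  set P : Fin m → MvPolynomial (Fin m) ℝ :=
    fun i => C β * X i ^ 3 - ∑ j, C (A i j) * X j with hP
  set W : Submodule ℝ (MvPolynomial (Fin m) ℝ) := Submodule.span ℝ (Set.range fun d : Fin m → Fin 3 =>
      (monomial (Finsupp.equivFunOnFinite.symm fun i => ((d i : ℕ))) (1:ℝ))) with hW
  set I : Ideal (MvPolynomial (Fin m) ℝ) := Ideal.span (Set.range P) with hI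
  set M : Submodule ℝ (MvPolynomial (Fin m) ℝ) := W ⊔ Submodule.restrictScalars ℝ I with hM
  -- small monomials are in W
  have hWmem : ∀ d : Fin m →₀ ℕ, (∀ i, d i ≤ 2) → monomial d (1:ℝ) ∈ W := by
    intro d hd
    apply Submodule.subset_span
    refine ⟨fun i => ⟨d i, by have := hd i; omega⟩, ?_⟩
    congr 1
    ext i
    simp
  have key : ∀ N : ℕ, ∀ d : Fin m →₀ ℕ, (d.sum fun _ k => k) ≤ N → monomial d (1:ℝ) ∈ M := by
    intro N
    induction N with
    | zero =>
      intro d hd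
      refine Submodule.mem_sup_left (hWmem d fun i => ?_)
      have := le_fsum d i
      omega
    | succ N ih =>
      intro d hd
      by_cases hsmall : ∀ i, d i ≤ 2
      · exact Submodule.mem_sup_left (hWmem d hsmall)
      · push_neg at hsmall
        obtain ⟨i, hi⟩ := hsmall
        set d' : Fin m →₀ ℕ := d - Finsupp.single i 3 with hd'
        have hdd : d = d' + Finsupp.single i 3 := by
          ext j
          simp only [hd', Finsupp.add_apply, Finsupp.tsub_apply, Finsupp.single_apply]
          rcases eq_or_ne i j with h | h
          · subst h; simp; omega
          · simp [h]
        have hsum : (d.sum fun _ k => k) = (d'.sum fun _ k => k) + 3 := by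
          rw [hdd, fsum_add, fsum_single]
        -- the expansion
        have expand : C β * monomial d (1:ℝ) = monomial d' 1 * P i
            + ∑ j, C (A i j) * monomial (d' + Finsupp.single j 1) (1:ℝ) := by
          rw [hP]
          rw [mul_sub, Finset.mul_sum]
          have e1 : monomial d' (1:ℝ) * (C β * X i ^ 3) = C β * monomial d 1 := by
            rw [X_pow_eq_monomial, C_mul_monomial, C_mul_monomial, monomial_mul, hdd]
            ring_nf
          have e2 : ∀ j, monomial d' (1:ℝ) * (C (A i j) * X j)
              = C (A i j) * monomial (d' + Finsupp.single j 1) 1 := by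
            intro j
            rw [X, C_mul_monomial, C_mul_monomial, monomial_mul]
            ring_nf
          rw [e1]
          rw [Finset.sum_congr rfl fun j _ => e2 j]
          ring
        have hPmem : monomial d' (1:ℝ) * P i ∈ M := by
          refine Submodule.mem_sup_right ?_
          exact Ideal.mul_mem_left _ _ (Ideal.subset_span ⟨i, rfl⟩)
        have hsummem : ∀ j, C (A i j) * monomial (d' + Finsupp.single j 1) (1:ℝ) ∈ M := by
          intro j
          rw [← smul_eq_C_mul]
          refine Submodule.smul_mem _ _ (ih _ ?_)
          rw [fsum_add, fsum_single]
          omega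
        have : C β * monomial d (1:ℝ) ∈ M := by
          rw [expand]
          exact Submodule.add_mem _ hPmem (Submodule.sum_mem _ fun j _ => hsummem j)
        have h2 : monomial d (1:ℝ) = β⁻¹ • (C β * monomial d 1) := by
          rw [← smul_eq_C_mul, smul_smul, inv_mul_cancel₀ hβ, one_smul]
        rw [h2]
        exact Submodule.smul_mem _ _ this
  -- conclude
  rw [eq_top_iff]
  intro p _
  rw [← support_sum_monomial_coeff p]
  refine Submodule.sum_mem _ fun d _ => ?_
  have : monomial d (coeff d p) = (coeff d p) • monomial d (1:ℝ) := by
    rw [smul_monomial, smul_eq_mul, mul_one]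
  rw [this]
  exact Submodule.smul_mem _ _ (key _ d le_rfl)

lemma fix_finite {m : ℕ} (A : Matrix (Fin m) (Fin m) ℝ) {β : ℝ} (hβ : β ≠ 0) :
    {v : Fin m → ℝ | ∀ i, β * v i ^ 3 = (A *ᵥ v) i}.Finite := by
  classical
  set V := {v : Fin m → ℝ | ∀ i, β * v i ^ 3 = (A *ᵥ v) i} with hV
  by_contra hinf
  have hinf2 : V.Infinite := hinf
  set P : Fin m → MvPolynomial (Fin m) ℝ :=
    fun i => C β * X i ^ 3 - ∑ j, C (A i j) * X j with hP
  set W : Submodule ℝ (MvPolynomial (Fin m) ℝ) := Submodule.span ℝ (Set.range fun d : Fin m → Fin 3 =>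
      (monomial (Finsupp.equivFunOnFinite.symm fun i => ((d i : ℕ))) (1:ℝ))) with hW
  set I : Ideal (MvPolynomial (Fin m) ℝ) := Ideal.span (Set.range P) with hI
  have hMtop := span_top A hβ
  haveI : FiniteDimensional ℝ W := FiniteDimensional.span_of_finite ℝ (Set.finite_range _)
  set r := Module.finrank ℝ W with hr
  obtain ⟨s, hsub, hcard⟩ := hinf2.exists_subset_card_eq (r + 1)
  -- evaluation map
  set Φ : MvPolynomial (Fin m) ℝ →ₗ[ℝ] (↥s → ℝ) :=
    LinearMap.pi (fun y => (aeval (y : Fin m → ℝ)).toLinearMap) with hΦ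
  -- Φ kills I
  have hΦI : ∀ q ∈ I, Φ q = 0 := by
    intro q hq
    funext y
    have hy : (y : Fin m → ℝ) ∈ V := hsub y.2
    have hker : I ≤ RingHom.ker ((aeval (y : Fin m → ℝ)).toRingHom : MvPolynomial (Fin m) ℝ →+* ℝ) := by
      rw [hI, Ideal.span_le]
      rintro _ ⟨i, rfl⟩
      simp only [SetLike.mem_coe, RingHom.mem_ker, AlgHom.toRingHom_eq_coe, RingHom.coe_coe]
      have h0 := hy i
      simp only [Matrix.mulVec, dotProduct] at h0
      rw [hP]
      simp only [map_sub, _root_.map_mul, map_sum, aeval_X, map_pow, aeval_C]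
      rw [sub_eq_zero]
      exact h0
    have := hker hq
    simpa [hΦ] using this
  -- separators
  have hsep : ∀ y : ↥s, ∃ p : MvPolynomial (Fin m) ℝ,
      aeval (y : Fin m → ℝ) p = 1 ∧ ∀ z : ↥s, z ≠ y → aeval (z : Fin m → ℝ) p = 0 := by
    intro y
    have hfac : ∀ z : ↥s, ∃ p : MvPolynomial (Fin m) ℝ,
        aeval (y : Fin m → ℝ) p = 1 ∧ (z ≠ y → aeval (z : Fin m → ℝ) p = 0) := by
      intro z
      by_cases hz : z = y
      · exact ⟨1, by simp, fun h => absurd hz h⟩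
      refine ?_
      have hne : (y : Fin m → ℝ) ≠ (z : Fin m → ℝ) := fun h => hz (Subtype.ext h.symm)
      obtain ⟨i, hi⟩ := Function.ne_iff.mp hne
      refine ⟨C ((y : Fin m → ℝ) i - (z : Fin m → ℝ) i)⁻¹ * (X i - C ((z : Fin m → ℝ) i)), ?_, ?_⟩
      · simp only [_root_.map_mul, map_sub, aeval_X, aeval_C, Algebra.algebraMap_self, RingHom.id_apply]
        field_simp [sub_ne_zero.mpr hi]
      · intro _; simp [_root_.map_mul, map_sub, aeval_X, aeval_C]
    choose p hp1 hp0 using hfac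
    refine ⟨∏ z, p z, ?_, ?_⟩
    · rw [map_prod]
      exact Finset.prod_eq_one fun z _ => hp1 z
    · intro z hz
      rw [map_prod]
      exact Finset.prod_eq_zero (Finset.mem_univ z) (hp0 z hz)
  choose sep hsep1 hsep0 using hsep
  have hsurj : Function.Surjective (Φ.comp (W.subtype)) := by
    intro v
    set p : MvPolynomial (Fin m) ℝ := ∑ y, v y • sep y with hp
    have hΦp : Φ p = v := by
      funext z
      have : Φ p z = ∑ y, v y * aeval (z : Fin m → ℝ) (sep y) := by
        simp [hp, hΦ, map_sum, _root_.map_smul]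
      rw [this, Finset.sum_eq_single z]
      · rw [hsep1 z, mul_one]
      · intro y _ hyz
        rw [hsep0 y z (by exact fun h => hyz (id h.symm) ), mul_zero]
      · intro h
        exact absurd (Finset.mem_univ z) h
    have hpTop : p ∈ W ⊔ Submodule.restrictScalars ℝ I := by
      rw [hW, hI, hP]
      rw [hMtop]
      trivial
    obtain ⟨w, hw, q, hq, hwq⟩ := Submodule.mem_sup.mp hpTop
    refine ⟨⟨w, hw⟩, ?_⟩
    have hq0 : Φ q = 0 := hΦI q hq
    have : Φ w = v := by
      rw [← hΦp, ← hwq, map_add, hq0, add_zero]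
    simpa using this
  have h1 : Module.finrank ℝ (↥s → ℝ) ≤ r := by
    have h2 := LinearMap.finrank_range_le (Φ.comp W.subtype)
    rw [LinearMap.range_eq_top.mpr hsurj] at h2
    rw [finrank_top] at h2
    exact h2
  rw [Module.finrank_pi] at h1
  rw [Fintype.card_coe, hcard] at h1
  omega


lemma dot_symm {m : ℕ} {A : Matrix (Fin m) (Fin m) ℝ} (hA : A.IsHermitian) (u v : Fin m → ℝ) :
    u ⬝ᵥ (A *ᵥ v) = v ⬝ᵥ (A *ᵥ u) := by
  calc u ⬝ᵥ (A *ᵥ v) = ∑ i, ∑ j, u i * (A i j * v j) := by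
        simp [dotProduct, mulVec, Finset.mul_sum]
    _ = ∑ j, ∑ i, u i * (A i j * v j) := Finset.sum_comm
    _ = v ⬝ᵥ (A *ᵥ u) := by
        simp only [dotProduct, mulVec, Finset.mul_sum]
        refine Finset.sum_congr rfl fun j _ => Finset.sum_congr rfl fun i _ => ?_
        rw [← hA.apply j i]
        simp only [star_trivial]
        ring

lemma descent {m : ℕ} {A : Matrix (Fin m) (Fin m) ℝ} (hA : A.IsHermitian) {μ β : ℝ}
    (hβ : 0 ≤ β) (hμle : ∀ i, μ ≤ hA.eigenvalues i) (a b : Fin m → ℝ)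
    (hb : ∀ i, β * b i ^ 3 = (A *ᵥ a) i) :
    (β/4 * ∑ i, b i ^ 4 - 2⁻¹ * (b ⬝ᵥ (A *ᵥ b))) + μ/2 * ∑ i, (a i - b i)^2
      ≤ β/4 * ∑ i, a i ^ 4 - 2⁻¹ * (a ⬝ᵥ (A *ᵥ a)) := by
  have hQ : (a - b) ⬝ᵥ (A *ᵥ (a - b))
      = a ⬝ᵥ (A *ᵥ a) - 2 * (b ⬝ᵥ (A *ᵥ a)) + b ⬝ᵥ (A *ᵥ b) := by
    rw [Matrix.mulVec_sub, sub_dotProduct, dotProduct_sub, dotProduct_sub, dot_symm hA a b]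
    ring
  have hQμ : μ * (∑ i, (a i - b i)^2) ≤ (a - b) ⬝ᵥ (A *ᵥ (a - b)) := by
    have := quad_lower hA hμle (a - b)
    simpa using this
  have hlin : ∑ i, β * b i ^ 3 * (a i - b i)
      = a ⬝ᵥ (A *ᵥ a) - b ⬝ᵥ (A *ᵥ a) := by
    calc ∑ i, β * b i ^ 3 * (a i - b i) = ∑ i, (A *ᵥ a) i * (a i - b i) := by
          refine Finset.sum_congr rfl fun i _ => ?_
          rw [hb i]
      _ = a ⬝ᵥ (A *ᵥ a) - b ⬝ᵥ (A *ᵥ a) := by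
          simp only [dotProduct, mul_sub, Finset.sum_sub_distrib]
          congr 1 <;> exact Finset.sum_congr rfl fun i _ => by ring
  have hG : β/4 * (∑ i, a i ^ 4) - β/4 * (∑ i, b i ^ 4) - (∑ i, β * b i ^ 3 * (a i - b i))
      = ∑ i, (β * (a i)^4/4 - β * (b i)^4/4 - β * (b i)^3 * (a i - b i)) := by
    simp only [Finset.sum_sub_distrib, Finset.mul_sum]
    congr 1
    congr 1 <;> [skip; skip] <;> exact Finset.sum_congr rfl fun i _ => by ring
  have hG0 : 0 ≤ ∑ i, (β * (a i)^4/4 - β * (b i)^4/4 - β * (b i)^3 * (a i - b i)) := by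
    refine Finset.sum_nonneg fun i _ => ?_
    nlinarith [sq_nonneg (a i - b i), sq_nonneg (a i + b i), sq_nonneg (b i), sq_nonneg (a i),
      mul_nonneg (mul_nonneg hβ (sq_nonneg (a i - b i))) (sq_nonneg (a i + b i)),
      mul_nonneg (mul_nonneg hβ (sq_nonneg (a i - b i))) (sq_nonneg (b i))]
  linarith [hQ, hQμ, hlin, hG, hG0]

lemma mulVec_abs_bound {m : ℕ} (A : Matrix (Fin m) (Fin m) ℝ) (y : Fin m → ℝ) (M : ℝ)
    (hy : ∀ j, |y j| ≤ M) (i : Fin m) : |(A *ᵥ y) i| ≤ (∑ j, |A i j|) * M := by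
  have hM : 0 ≤ M := le_trans (abs_nonneg _) (hy i)
  calc |(A *ᵥ y) i| = |∑ j, A i j * y j| := by simp [Matrix.mulVec, dotProduct]
    _ ≤ ∑ j, |A i j * y j| := Finset.abs_sum_le_sum_abs _ _
    _ ≤ ∑ j, |A i j| * M := by
        refine Finset.sum_le_sum fun j _ => ?_
        rw [abs_mul]
        exact mul_le_mul_of_nonneg_left (hy j) (abs_nonneg _)
    _ = (∑ j, |A i j|) * M := by rw [Finset.sum_mul]

theorem stmt_14 (n : ℕ) (hn : 1 ≤ n) (J : Matrix (Fin n) (Fin n) ℝ)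
    (hJ : J.IsHermitian) (hJd : ∀ i, J i i = 0)
    (α β : ℝ) (hα : 0 < α) (hβ : 0 < β)
    (hA : (J + α • (1 : Matrix (Fin n) (Fin n) ℝ)).IsHermitian)
    (hμ : 0 < ⨅ i, hA.eigenvalues i)
    (T : (Fin n → ℝ) → (Fin n → ℝ))
    (hT : ∀ y : Fin n → ℝ, ∀ i, (T y i) ^ 3 = β⁻¹ * ((J + α • 1) *ᵥ y) i)
    (x : ℕ → Fin n → ℝ) (hx : ∀ k, x (k + 1) = T (x k)) :
    ∃ xstar : Fin n → ℝ, Tendsto x atTop (nhds xstar) ∧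
      ∀ i, β * xstar i ^ 3 = ((J + α • 1) *ᵥ xstar) i := by
  classical
  haveI : Nonempty (Fin n) := Fin.pos_iff_nonempty.mp hn
  set A : Matrix (Fin n) (Fin n) ℝ := J + α • 1 with hAdef
  set μ : ℝ := ⨅ i, hA.eigenvalues i with hμdef
  have hβ0 : β ≠ 0 := ne_of_gt hβ
  have hμle : ∀ i, μ ≤ hA.eigenvalues i := fun i => ciInf_le (Finite.bddBelow_range _) i
  have hiter : ∀ k i, β * (x (k+1) i)^3 = (A *ᵥ (x k)) i := by
    intro k i
    rw [hx k, hT (x k) i]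
    field_simp
  clear_value A μ
  -- boundedness of the orbit
  set C : ℝ := ∑ i, ∑ j, |A i j| with hC
  have hC0 : 0 ≤ C := Finset.sum_nonneg fun i _ => Finset.sum_nonneg fun j _ => abs_nonneg _
  set M : ℝ := (∑ i, |x 0 i|) + Real.sqrt (C / β) + 1 with hMdef
  have hsum0 : 0 ≤ ∑ i, |x 0 i| := Finset.sum_nonneg fun i _ => abs_nonneg _
  have hsqrt0 : 0 ≤ Real.sqrt (C / β) := Real.sqrt_nonneg _
  have hM0 : 0 < M := by rw [hMdef]; linarith
  have hCM : C ≤ β * M^2 := by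
    have h1 : Real.sqrt (C / β) ≤ M := by rw [hMdef]; linarith
    have h2 : C / β ≤ M^2 := by
      have := Real.sq_sqrt (div_nonneg hC0 hβ.le)
      nlinarith [Real.sqrt_nonneg (C / β)]
    calc C = β * (C / β) := by field_simp
      _ ≤ β * M^2 := mul_le_mul_of_nonneg_left h2 hβ.le
  have hrow : ∀ i, (∑ j, |A i j|) ≤ C := by
    intro i
    exact Finset.single_le_sum (f := fun i => ∑ j, |A i j|)
      (fun i _ => Finset.sum_nonneg fun j _ => abs_nonneg _) (Finset.mem_univ i)
  clear_value C M
  have hbound : ∀ k i, |x k i| ≤ M := by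
    intro k
    induction k with
    | zero =>
      intro i
      have := Finset.single_le_sum (f := fun j => |x 0 j|) (fun j _ => abs_nonneg _)
        (Finset.mem_univ i)
      rw [hMdef]; linarith
    | succ k ih =>
      intro i
      have h1 := hiter k i
      have h2 : |(A *ᵥ x k) i| ≤ C * M :=
        le_trans (mulVec_abs_bound A (x k) M ih i)
          (mul_le_mul_of_nonneg_right (hrow i) hM0.le)
      have h3 : |x (k+1) i| ^ 3 ≤ M ^ 3 := by
        have e1 : (x (k+1) i)^3 = β⁻¹ * (A *ᵥ x k) i := by
          field_simp at h1 ⊢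
          linarith [h1]
        have : |x (k+1) i| ^ 3 = |β⁻¹| * |(A *ᵥ x k) i| := by
          rw [← abs_pow, e1, abs_mul]
        rw [this, abs_of_pos (inv_pos.mpr hβ)]
        calc β⁻¹ * |(A *ᵥ x k) i| ≤ β⁻¹ * (C * M) := by
              exact mul_le_mul_of_nonneg_left h2 (inv_pos.mpr hβ).le
          _ ≤ β⁻¹ * (β * M^2 * M) := by
              refine mul_le_mul_of_nonneg_left ?_ (inv_pos.mpr hβ).le
              exact mul_le_mul_of_nonneg_right hCM hM0.le
          _ = M ^ 3 := by field_simp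
      exact le_of_pow_le_pow_left₀ (by norm_num) hM0.le h3
  -- descent of H
  set H : (Fin n → ℝ) → ℝ := fun y => β/4 * ∑ i, y i ^ 4 - 2⁻¹ * (y ⬝ᵥ (A *ᵥ y)) with hH
  clear_value H
  have hdesc : ∀ k, H (x (k+1)) + μ/2 * ∑ i, (x k i - x (k+1) i)^2 ≤ H (x k) := by
    intro k
    simp only [hH]
    exact descent hA hβ.le hμle (x k) (x (k+1)) (fun i => hiter k i)
  have hSnn : ∀ k, 0 ≤ ∑ i, (x k i - x (k+1) i)^2 :=
    fun k => Finset.sum_nonneg fun i _ => sq_nonneg _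
  have hHanti : Antitone (fun k => H (x k)) := antitone_nat_of_succ_le fun k => by
    have h1 := hdesc k
    have h2 : 0 ≤ μ/2 * ∑ i, (x k i - x (k+1) i)^2 :=
      mul_nonneg (by positivity) (hSnn k)
    exact le_trans (le_add_of_nonneg_right h2) h1
  have hHlb : ∀ k, -(2⁻¹ * (C * M^2)) ≤ H (x k) := by
    intro k
    have h4 : |x k ⬝ᵥ (A *ᵥ x k)| ≤ C * M^2 := by
      calc |x k ⬝ᵥ (A *ᵥ x k)| ≤ ∑ i, |x k i * (A *ᵥ x k) i| :=
            Finset.abs_sum_le_sum_abs _ _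
        _ ≤ ∑ i, M * ((∑ j, |A i j|) * M) := by
            refine Finset.sum_le_sum fun i _ => ?_
            rw [abs_mul]
            exact mul_le_mul (hbound k i) (mulVec_abs_bound A (x k) M (hbound k) i)
              (abs_nonneg _) hM0.le
        _ = (∑ i, (∑ j, |A i j|)) * M^2 := by
            rw [Finset.sum_mul]
            exact Finset.sum_congr rfl fun i _ => by ring
        _ = C * M^2 := by rw [← hC]
    have h5 : 0 ≤ β/4 * ∑ i, x k i ^ 4 := by
      refine mul_nonneg (by positivity) (Finset.sum_nonneg fun i _ => by positivity)
    obtain ⟨hl, hr⟩ := abs_le.mp h4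
    have h6 : 0 ≤ β/4 * ∑ i, x k i ^ 4 := h5
    simp only [hH]
    linarith
  obtain ⟨L, hL⟩ : ∃ L, Tendsto (fun k => H (x k)) atTop (𝓝 L) := by
    refine ⟨_, tendsto_atTop_ciInf hHanti ⟨-(2⁻¹ * (C * M^2)), ?_⟩⟩
    rintro y ⟨k, rfl⟩
    exact hHlb k
  have hL1 : Tendsto (fun k => H (x (k+1))) atTop (𝓝 L) :=
    hL.comp (tendsto_add_atTop_nat 1)
  have hdiff0 : Tendsto (fun k => ∑ i, (x k i - x (k+1) i)^2) atTop (𝓝 0) := by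
    have hub : ∀ k, ∑ i, (x k i - x (k+1) i)^2 ≤ (2/μ) * (H (x k) - H (x (k+1))) := by
      intro k
      have hμpos : (0:ℝ) < μ := hμ
      have h2 : μ/2 * ∑ i, (x k i - x (k+1) i)^2 ≤ H (x k) - H (x (k+1)) := by linarith [hdesc k]
      calc ∑ i, (x k i - x (k+1) i)^2 = (2/μ) * (μ/2 * ∑ i, (x k i - x (k+1) i)^2) := by
            field_simp
        _ ≤ (2/μ) * (H (x k) - H (x (k+1))) :=
            mul_le_mul_of_nonneg_left h2 (by positivity)
    have htend : Tendsto (fun k => (2/μ) * (H (x k) - H (x (k+1)))) atTop (𝓝 0) := by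
      have := (hL.sub hL1).const_mul (2/μ)
      simpa using this
    exact tendsto_of_tendsto_of_tendsto_of_le_of_le tendsto_const_nhds htend hSnn hub
  have hΔ : ∀ i, Tendsto (fun k => x (k+1) i - x k i) atTop (𝓝 0) := by
    intro i
    rw [tendsto_zero_iff_abs_tendsto_zero]
    have hsq : Tendsto (fun k => Real.sqrt (∑ j, (x k j - x (k+1) j)^2)) atTop (𝓝 0) := by
      have := (Real.continuous_sqrt.tendsto 0).comp hdiff0
      simpa [Function.comp_def] using this
    refine tendsto_of_tendsto_of_tendsto_of_le_of_le tendsto_const_nhds hsq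
      (fun k => abs_nonneg _) (fun k => ?_)
    have h1 : (x (k+1) i - x k i)^2 ≤ ∑ j, (x k j - x (k+1) j)^2 := by
      have h0 := Finset.single_le_sum (f := fun j => (x k j - x (k+1) j)^2)
        (fun j _ => sq_nonneg _) (Finset.mem_univ i)
      have h2 : (x (k+1) i - x k i)^2 = (x k i - x (k+1) i)^2 := by ring
      rw [h2]
      exact h0
    calc |x (k+1) i - x k i| = Real.sqrt ((x (k+1) i - x k i)^2) := (Real.sqrt_sq_eq_abs _).symm
      _ ≤ Real.sqrt (∑ j, (x k j - x (k+1) j)^2) := Real.sqrt_le_sqrt h1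
  -- differences tend to 0 in the Pi metric
  have hΔpi : Tendsto (fun k => x (k+1) - x k) atTop (𝓝 0) := by
    rw [tendsto_pi_nhds]
    intro i
    simpa using hΔ i
  have hΔdist : Tendsto (fun k => dist (x (k+1)) (x k)) atTop (𝓝 0) := by
    have h1 := tendsto_zero_iff_norm_tendsto_zero.mp hΔpi
    simpa [dist_eq_norm] using h1
  set Fix : Set (Fin n → ℝ) := {v | ∀ i, β * v i ^ 3 = (A *ᵥ v) i} with hFixdef
  have hclus : ∀ (φ : ℕ → ℕ), StrictMono φ → ∀ c, Tendsto (fun j => x (φ j)) atTop (𝓝 c) →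
      c ∈ Fix := by
    intro φ hφ c hc i
    have h1 : Tendsto (fun j => x (φ j) i) atTop (𝓝 (c i)) := tendsto_pi_nhds.mp hc i
    have h3 : Tendsto (fun j => x (φ j + 1) i - x (φ j) i) atTop (𝓝 0) :=
      (hΔ i).comp hφ.tendsto_atTop
    have h2 : Tendsto (fun j => x (φ j + 1) i) atTop (𝓝 (c i)) := by
      have h4 := h1.add h3
      rw [add_zero] at h4
      exact h4.congr fun j => by ring
    have h4 : Tendsto (fun j => β * (x (φ j + 1) i)^3) atTop (𝓝 (β * c i ^ 3)) :=
      (h2.pow 3).const_mul β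
    have h6 : Tendsto (fun j => (A *ᵥ x (φ j)) i) atTop (𝓝 ((A *ᵥ c) i)) := by
      simp only [Matrix.mulVec, dotProduct]
      exact tendsto_finset_sum _ fun j _ => tendsto_const_nhds.mul (tendsto_pi_nhds.mp hc j)
    exact tendsto_nhds_unique (h4.congr fun j => hiter (φ j) i) h6
  have hcompact : IsCompact (Metric.closedBall (0 : Fin n → ℝ) M) := isCompact_closedBall _ _
  have hmem : ∀ k, x k ∈ Metric.closedBall (0 : Fin n → ℝ) M := by
    intro k
    rw [Metric.mem_closedBall, dist_zero_right]
    refine (pi_norm_le_iff_of_nonneg hM0.le).mpr fun i => ?_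
    simpa [Real.norm_eq_abs] using hbound k i
  obtain ⟨a, _, φ, hφmono, hφtend⟩ := hcompact.tendsto_subseq hmem
  have haFix : a ∈ Fix := hclus φ hφmono a hφtend
  have hFixFin : Fix.Finite := fix_finite A hβ0
  obtain ⟨ε₀, hε₀pos, hε₀⟩ : ∃ ε₀ > (0:ℝ), ∀ f ∈ Fix, f ≠ a → ε₀ ≤ dist a f := by
    by_cases hS : ((hFixFin.toFinset.erase a).image (dist a)).Nonempty
    · refine ⟨((hFixFin.toFinset.erase a).image (dist a)).min' hS, ?_, ?_⟩
      · obtain ⟨f, hf, hfeq⟩ := Finset.mem_image.mp (Finset.min'_mem _ hS)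
        have hfa : f ≠ a := (Finset.mem_erase.mp hf).1
        rw [← hfeq]
        exact dist_pos.mpr (fun h => hfa h.symm)
      · intro f hf hne
        exact Finset.min'_le _ _ (Finset.mem_image.mpr
          ⟨f, Finset.mem_erase.mpr ⟨hne, hFixFin.mem_toFinset.mpr hf⟩, rfl⟩)
    · refine ⟨1, one_pos, fun f hf hne => absurd ?_ hS⟩
      exact ⟨dist a f, Finset.mem_image.mpr
        ⟨f, Finset.mem_erase.mpr ⟨hne, hFixFin.mem_toFinset.mpr hf⟩, rfl⟩⟩
  have hnear : ∀ δ : ℝ, 0 < δ → ∀ᶠ k in atTop, ∃ f ∈ Fix, dist (x k) f < δ := by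
    intro δ hδ
    by_contra hcon
    rw [Filter.not_eventually] at hcon
    have hcon2 : ∃ᶠ k in atTop, ¬ ∃ f ∈ Fix, dist (x k) f < δ := hcon
    obtain ⟨ψ, hψmono, hψ⟩ := Filter.extraction_of_frequently_atTop hcon2
    obtain ⟨c, _, ρ, hρmono, hρtend⟩ := hcompact.tendsto_subseq (fun j => hmem (ψ j))
    have hcFix : c ∈ Fix := hclus (ψ ∘ ρ) (hψmono.comp hρmono) c hρtend
    have hdist : Tendsto (fun j => dist (x (ψ (ρ j))) c) atTop (𝓝 0) := by
      have h1 := hρtend.dist (tendsto_const_nhds (x := c))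
      simpa using h1
    have hged : ∀ j, δ ≤ dist (x (ψ (ρ j))) c := by
      intro j
      have h := hψ (ρ j)
      push_neg at h
      exact h c hcFix
    have hle : δ ≤ 0 := ge_of_tendsto' hdist hged
    linarith
  refine ⟨a, ?_, haFix⟩
  rw [Metric.tendsto_atTop]
  intro ε hε
  have hδpos : 0 < min (ε/2) (ε₀/4) := lt_min (by linarith) (by linarith)
  set δ := min (ε/2) (ε₀/4) with hδdef
  have hδε : δ ≤ ε/2 := min_le_left _ _
  have hδε₀ : δ ≤ ε₀/4 := min_le_right _ _
  obtain ⟨K₁, hK₁⟩ := Filter.eventually_atTop.mp (hnear δ hδpos)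
  obtain ⟨K₂, hK₂⟩ := Filter.eventually_atTop.mp
    (hΔdist.eventually (gt_mem_nhds (show (0:ℝ) < ε₀/4 by linarith)))
  obtain ⟨N₀, hN₀⟩ := Metric.tendsto_atTop.mp hφtend δ hδpos
  set m₀ := max N₀ (max K₁ K₂) with hm₀def
  set k₀ := φ m₀ with hk₀def
  have hm₀k₀ : m₀ ≤ k₀ := hφmono.le_apply
  have hk₀K₁ : K₁ ≤ k₀ := le_trans (le_trans (le_max_left _ _) (le_max_right _ _)) hm₀k₀
  have hk₀K₂ : K₂ ≤ k₀ := le_trans (le_trans (le_max_right _ _) (le_max_right _ _)) hm₀k₀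
  have hk₀a : dist (x k₀) a < δ := hN₀ m₀ (le_max_left _ _)
  have main : ∀ k, k₀ ≤ k → dist (x k) a < δ := by
    intro k hk
    induction k, hk using Nat.le_induction with
    | base => exact hk₀a
    | succ k hk ih =>
      have hstep : dist (x (k+1)) (x k) < ε₀/4 := hK₂ k (le_trans hk₀K₂ hk)
      obtain ⟨f, hfFix, hf⟩ := hK₁ (k+1) (by omega)
      have hd1 := dist_triangle a (x (k+1)) f
      have hd2 := dist_triangle (x (k+1)) (x k) a
      have hc1 : dist a (x (k+1)) = dist (x (k+1)) a := dist_comm _ _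
      have hc2 : dist (x (k+1)) f = dist f (x (k+1)) := dist_comm _ _
      have hfa : f = a := by
        by_contra hne
        have h8 := hε₀ f hfFix hne
        linarith
      rw [hfa] at hf
      exact hf
  refine ⟨k₀, fun k hk => ?_⟩
  have h9 := main k hk
  linarith
end

section
/- Let n ≥ 1, let J be a symmetric n×n real matrix with zero diagonal, and let α, β > 0. If β ≥ ‖J + αI‖_∞, where ‖A‖_∞ = max_i ∑_j |A_{ij}| is the maximum-row-sum operator norm, then the DOCH map T satisfies ‖T(x)‖_∞ ≤ ‖x‖_∞^{1/3} for all x ∈ ℝⁿ, and consequently the DOCH iterates x^(k+1) = T(x^(k)) satisfy ‖x^(k)‖_∞ ≤ max(1, ‖x^(0)‖_∞) for all k ≥ 0; in particular the iterates are bounded for every α > 0. -/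
/-! Each coordinate of `(J + αI) y` is at most the corresponding row sum of `|J + αI|` times
`‖y‖_∞`, hence at most `β ‖y‖_∞`; taking cube roots gives `‖T y‖_∞ ≤ ‖y‖_∞^{1/3}`. Since
`t ↦ t^{1/3}` is monotone and maps `[0, M]` into `[0, M]` once `M ≥ 1`, the interval
`[0, max 1 ‖x⁽⁰⁾‖_∞]` is invariant under the iteration. -/

open Matrix

lemma iSup_abs_eq_norm {ι : Type*} [Fintype ι] (v : ι → ℝ) : ⨆ i, |v i| = ‖v‖ :=
  le_antisymm (Real.iSup_le (fun i => norm_le_pi_norm v i) (norm_nonneg v))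
    ((pi_norm_le_iff_of_nonneg (Real.iSup_nonneg fun i => abs_nonneg (v i))).mpr
      fun i => le_ciSup (f := fun i => |v i|) (Set.finite_range _).bddAbove i)

lemma abs_mulVec_apply_le {m n : Type*} [Fintype n] (A : Matrix m n ℝ) (v : n → ℝ) (i : m) :
    |(A *ᵥ v) i| ≤ (∑ j, |A i j|) * ‖v‖ :=
  calc |(A *ᵥ v) i| = |∑ j, A i j * v j| := rfl
    _ ≤ ∑ j, |A i j| * |v j| := by
      simpa only [abs_mul] using Finset.abs_sum_le_sum_abs (fun j => A i j * v j) Finset.univ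
    _ ≤ ∑ j, |A i j| * ‖v‖ := by
      gcongr with j
      exact norm_le_pi_norm v j
    _ = (∑ j, |A i j|) * ‖v‖ := (Finset.sum_mul ..).symm

lemma abs_le_rpow_one_third_of_pow_three_le {y s : ℝ} (hs : 0 ≤ s) (h : |y| ^ 3 ≤ s) :
    |y| ≤ s ^ ((1 : ℝ) / 3) := by
  rw [one_div, Real.le_rpow_inv_iff_of_pos (abs_nonneg y) hs (by norm_num)]
  exact_mod_cast h

lemma norm_le_rpow_one_third_of_pow_three_eq {m n : Type*} [Fintype m] [Fintype n]
    (A : Matrix m n ℝ) {β : ℝ} (hA : ∀ i, ∑ j, |A i j| ≤ β) {y : n → ℝ} {z : m → ℝ}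
    (hz : ∀ i, z i ^ 3 = β⁻¹ * (A *ᵥ y) i) :
    ‖z‖ ≤ ‖y‖ ^ ((1 : ℝ) / 3) := by
  refine (pi_norm_le_iff_of_nonneg (by positivity)).mpr fun i => ?_
  have hβ : 0 ≤ β := (Finset.sum_nonneg fun j _ => abs_nonneg (A i j)).trans (hA i)
  rw [Real.norm_eq_abs]
  refine abs_le_rpow_one_third_of_pow_three_le (norm_nonneg y) ?_
  calc |z i| ^ 3 = β⁻¹ * |(A *ᵥ y) i| := by
        rw [← abs_pow, hz, abs_mul, abs_of_nonneg (inv_nonneg.mpr hβ)]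
    _ ≤ β⁻¹ * (β * ‖y‖) := by
        gcongr
        exact (abs_mulVec_apply_le A y i).trans (by gcongr; exact hA i)
    _ ≤ ‖y‖ := by
        rw [← mul_assoc]
        exact mul_le_of_le_one_left (norm_nonneg y) inv_mul_le_one

lemma le_max_one_of_le_rpow {a : ℕ → ℝ} {p : ℝ} (hp₀ : 0 ≤ p) (hp₁ : p ≤ 1)
    (ha : ∀ k, 0 ≤ a k) (h : ∀ k, a (k + 1) ≤ a k ^ p) (k : ℕ) : a k ≤ max 1 (a 0) := by
  induction k with
  | zero => exact le_max_right _ _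
  | succ k ih =>
    calc a (k + 1) ≤ a k ^ p := h k
      _ ≤ max 1 (a 0) ^ p := Real.rpow_le_rpow (ha k) ih hp₀
      _ ≤ max 1 (a 0) := Real.rpow_le_self_of_one_le (le_max_left _ _) hp₁

theorem stmt_15_general (n : ℕ) (J : Matrix (Fin n) (Fin n) ℝ)
    (α β : ℝ)
    (hβbig : ∀ i, ∑ j, |(J + α • (1 : Matrix (Fin n) (Fin n) ℝ)) i j| ≤ β)
    (T : (Fin n → ℝ) → (Fin n → ℝ))
    (hT : ∀ y : Fin n → ℝ, ∀ i, (T y i) ^ 3 = β⁻¹ * ((J + α • 1) *ᵥ y) i)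
    (x : ℕ → Fin n → ℝ) (hx : ∀ k, x (k + 1) = T (x k)) :
    (∀ v : Fin n → ℝ, (⨆ i, |T v i|) ≤ (⨆ i, |v i|) ^ ((1 : ℝ) / 3)) ∧
      ∀ k : ℕ, (⨆ i, |x k i|) ≤ max 1 (⨆ i, |x 0 i|) := by
  simp only [iSup_abs_eq_norm]
  have hT_norm (v : Fin n → ℝ) : ‖T v‖ ≤ ‖v‖ ^ ((1 : ℝ) / 3) :=
    norm_le_rpow_one_third_of_pow_three_eq _ hβbig (hT v)
  refine ⟨hT_norm, le_max_one_of_le_rpow (p := 1 / 3) (by norm_num) (by norm_num)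
    (fun k => norm_nonneg _) fun k => ?_⟩
  rw [hx k]
  exact hT_norm (x k)

theorem stmt_15 (n : ℕ) (hn : 1 ≤ n) (J : Matrix (Fin n) (Fin n) ℝ)
    (hJs : J.IsSymm) (hJd : ∀ i, J i i = 0)
    (α β : ℝ) (hα : 0 < α) (hβ : 0 < β)
    (hβbig : ∀ i, ∑ j, |(J + α • (1 : Matrix (Fin n) (Fin n) ℝ)) i j| ≤ β)
    (T : (Fin n → ℝ) → (Fin n → ℝ))
    (hT : ∀ y : Fin n → ℝ, ∀ i, (T y i) ^ 3 = β⁻¹ * ((J + α • 1) *ᵥ y) i)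
    (x : ℕ → Fin n → ℝ) (hx : ∀ k, x (k + 1) = T (x k)) :
    (∀ v : Fin n → ℝ, (⨆ i, |T v i|) ≤ (⨆ i, |v i|) ^ ((1 : ℝ) / 3)) ∧
      ∀ k : ℕ, (⨆ i, |x k i|) ≤ max 1 (⨆ i, |x 0 i|) :=
  stmt_15_general n J α β hβbig T hT x hx
end
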